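/- arXiv:2410.14809 — 5 statements merged into one kernel-verified Lean document; each statement's English description precedes it below -/
import Mathlib

section
/- Let p < 1 and let K ⊆ ℝ be compact. Then cap_p(K) ≥ (cap_p([−1,1])/2) · λ(K), where λ denotes Lebesgue measure on ℝ. In other words, among compact subsets of ℝ of given length, the closed interval minimizes Riesz p-capacity. -/
open MeasureTheory Metric Set ENNReal Filter

noncomputable section

namespace Riesz

variable {E : Type*} [MeasurableSpace E] [PseudoMetricSpace E]

/-- Borel probability measures supported on `K` (i.e. giving full mass to `K`). -/
def probOn (K : Set E) : Set (Measure E) :=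
  {μ | IsProbabilityMeasure μ ∧ μ Kᶜ = 0}

/-- The Riesz `p`-energy `∬ |x-y|^{-p} dμ dμ` of a measure `μ`, valued in `ℝ≥0∞`.
(The kernel `(dist x y)^{-p}`, computed in `ℝ≥0∞`, is `∞` on the diagonal when `p > 0`
and `0` on the diagonal when `p < 0`.) -/
def energyOf (p : ℝ) (μ : Measure E) : ℝ≥0∞ :=
  ∫⁻ z : E × E, (ENNReal.ofReal (dist z.1 z.2)) ^ (-p) ∂(μ.prod μ)

/-- The Riesz `p`-energy of a set `K`, for `p ≠ 0`: a supremum over probability measures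
on `K` when `p < 0`, an infimum when `p > 0`.  (For `K = ∅` this gives `0` when `p < 0`
and `∞` when `p > 0`.) -/
def energy (p : ℝ) (K : Set E) : ℝ≥0∞ :=
  if p < 0 then ⨆ μ ∈ probOn K, energyOf p μ
  else ⨅ μ ∈ probOn K, energyOf p μ

/-- The logarithmic energy `∬ log (1/|x-y|) dμ dμ` of a measure, as an extended real:
the positive part (with value `∞` on the diagonal) minus the negative part. -/
def logEnergyOf (μ : Measure E) : EReal :=
  ((∫⁻ z : E × E, (if dist z.1 z.2 = 0 then ⊤ else
      ENNReal.ofReal (Real.log (1 / dist z.1 z.2))) ∂(μ.prod μ) : ℝ≥0∞) : EReal)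
  - ((∫⁻ z : E × E, ENNReal.ofReal (Real.log (dist z.1 z.2)) ∂(μ.prod μ) : ℝ≥0∞) : EReal)

/-- The logarithmic energy of a set `K`: infimum over probability measures on `K`. -/
def logEnergy (K : Set E) : EReal :=
  ⨅ μ ∈ probOn K, logEnergyOf μ

/-- The Riesz `p`-capacity of a set: `V_p(K)^{-1/p}` for `p ≠ 0`, and the logarithmic
capacity `exp(-V_log(K))` for `p = 0`. -/
def cap (p : ℝ) (K : Set E) : ℝ :=
  if p = 0 then
    (if logEnergy K = ⊤ then 0 else Real.exp (-(logEnergy K).toReal))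
  else ((energy p K).toReal) ^ (-1 / p)

/-- `μ` is a `p`-equilibrium measure of `K`: a probability measure on `K` whose
`p`-energy attains the optimal `p`-energy of `K`. -/
def IsEquilibrium (p : ℝ) (K : Set E) (μ : Measure E) : Prop :=
  μ ∈ probOn K ∧ energyOf p μ = energy p K

/-- A set `Z` has inner `p`-capacity zero: every compact subset has `p`-capacity zero. -/
def InnerCapZero (p : ℝ) (Z : Set E) : Prop :=
  ∀ Z' ⊆ Z, IsCompact Z' → cap p Z' = 0

end Riesz

end

/-!
Let `L = λ(K) > 0`. The cumulative length `x ↦ λ(K ∩ (-∞, x])` is `1`-Lipschitz, so its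
generalized inverse sends `[0, L]` into `K` without shrinking distances; rescaled to `[-1, 1]`,
it is a map `[-1, 1] → K` stretching distances by at least `L / 2`. Pushing a probability measure
on `[-1, 1]` forward along it gives a probability measure on `K` whose kernel `|x - y|^{-p}`
(or `log (1 / |x - y|)`) is compared pointwise with the original one at scale `L / 2`. Passing to
the optimal energies and then to capacities, the scale `L / 2` comes out as a linear factor.
-/

open Topology Bornology

namespace ENNReal

theorem rpow_le_rpow_of_nonpos {x y : ℝ≥0∞} {z : ℝ} (hxy : x ≤ y) (hz : z ≤ 0) :
    y ^ z ≤ x ^ z := by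
  have h := ENNReal.inv_le_inv.mpr (rpow_le_rpow hxy (neg_nonneg.mpr hz))
  rwa [← rpow_neg, ← rpow_neg, neg_neg] at h

theorem toReal_ofReal_rpow_mul {r : ℝ} (hr : 0 ≤ r) (p : ℝ) (V : ℝ≥0∞) :
    (ENNReal.ofReal r ^ (-p) * V).toReal = r ^ (-p) * V.toReal := by
  rw [ENNReal.toReal_mul, ← ENNReal.toReal_rpow, ENNReal.toReal_ofReal hr]

theorem ofReal_neg_add_ofReal_add_ofReal_le {x y s : ℝ} (h : y + s ≤ x) :
    ENNReal.ofReal (-x) + ENNReal.ofReal y + ENNReal.ofReal s ≤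
      ENNReal.ofReal (-y) + ENNReal.ofReal x + ENNReal.ofReal (-s) := by
  rw [← ENNReal.toReal_le_toReal (by finiteness) (by finiteness)]
  simp only [ENNReal.toReal_add ENNReal.ofReal_ne_top ENNReal.ofReal_ne_top,
    ENNReal.toReal_add (ENNReal.add_ne_top.mpr ⟨ENNReal.ofReal_ne_top, ENNReal.ofReal_ne_top⟩)
      ENNReal.ofReal_ne_top, ENNReal.toReal_ofReal']
  linarith [max_zero_sub_max_neg_zero_eq_self x, max_zero_sub_max_neg_zero_eq_self y,
    max_zero_sub_max_neg_zero_eq_self s]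

end ENNReal

/-- The two sides are logarithmic energies, each split into positive and negative parts. -/
theorem EReal.coe_ennreal_sub_le_of_add_le {x y z w : ℝ≥0∞} {c : ℝ} (hw : w ≠ ⊤)
    (h : x + w + ENNReal.ofReal c ≤ z + y + ENNReal.ofReal (-c)) :
    (x : EReal) - y ≤ (z : EReal) - w + ((-c : ℝ) : EReal) := by
  by_cases hy : y = ⊤
  · simp [hy]
  by_cases hz : z = ⊤
  · simp [hz, hw]
  have hx : x ≠ ⊤ := ne_top_of_le_ne_top (by finiteness)
    ((le_add_right (le_add_right le_rfl)).trans h)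
  have h' := ENNReal.toReal_mono (by finiteness) h
  rw [ENNReal.toReal_add (by finiteness) (by finiteness), ENNReal.toReal_add hx hw,
    ENNReal.toReal_add (by finiteness) (by finiteness), ENNReal.toReal_add hz hy,
    ENNReal.toReal_ofReal', ENNReal.toReal_ofReal'] at h'
  rw [← EReal.coe_ennreal_toReal hx, ← EReal.coe_ennreal_toReal hy,
    ← EReal.coe_ennreal_toReal hz, ← EReal.coe_ennreal_toReal hw, ← EReal.coe_sub,
    ← EReal.coe_sub, ← EReal.coe_add, EReal.coe_le_coe_iff]
  linarith [max_zero_sub_max_neg_zero_eq_self c]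

theorem Real.rpow_neg_mul_rpow_neg_one_div {r v p : ℝ} (hr : 0 < r) (hv : 0 ≤ v)
    (hp : p ≠ 0) :
    (r ^ (-p) * v) ^ (-1 / p) = r * v ^ (-1 / p) := by
  rw [Real.mul_rpow (by positivity) hv, ← Real.rpow_mul hr.le,
    show -p * (-1 / p) = 1 by field_simp, Real.rpow_one]

namespace MeasureTheory

theorem lintegral_prod_map_map {α β : Type*} [MeasurableSpace α] [MeasurableSpace β]
    {μ : Measure α} [SFinite μ] {h : α → β} (hh : Measurable h) {f : β × β → ℝ≥0∞}
    (hf : Measurable f) :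
    ∫⁻ z, f z ∂((μ.map h).prod (μ.map h)) = ∫⁻ z, f (h z.1, h z.2) ∂(μ.prod μ) := by
  rw [Measure.map_prod_map _ _ hh hh, lintegral_map hf (hh.prodMap hh)]
  rfl

theorem lintegral_add_add_const {α : Type*} [MeasurableSpace α] {μ : Measure α}
    [IsProbabilityMeasure μ] (f : α → ℝ≥0∞) {g : α → ℝ≥0∞} (hg : Measurable g) (c : ℝ≥0∞) :
    ∫⁻ z, (f z + g z + c) ∂μ = ∫⁻ z, f z ∂μ + ∫⁻ z, g z ∂μ + c := by
  rw [lintegral_add_right _ measurable_const, lintegral_add_right _ hg, lintegral_const,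
    measure_univ, mul_one]

end MeasureTheory

namespace Riesz

section Measurable

variable {E F : Type*} [MeasurableSpace E] [MeasurableSpace F]

theorem ae_mem_prod {S : Set E} {μ : Measure E} (hμ : μ ∈ probOn S) :
    ∀ᵐ z ∂(μ.prod μ), z.1 ∈ S ∧ z.2 ∈ S := by
  have : IsProbabilityMeasure μ := hμ.1
  have hS : ∀ᵐ x ∂μ, x ∈ S := ae_iff.mpr hμ.2
  exact (Measure.quasiMeasurePreserving_fst.ae hS).and
    (Measure.quasiMeasurePreserving_snd.ae hS)

theorem map_mem_probOn {S : Set E} {K : Set F} {h : E → F} (hh : Measurable h)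
    (hmaps : MapsTo h S K) (hK : MeasurableSet K) {μ : Measure E} (hμ : μ ∈ probOn S) :
    μ.map h ∈ probOn K := by
  have : IsProbabilityMeasure μ := hμ.1
  refine ⟨Measure.isProbabilityMeasure_map hh.aemeasurable, ?_⟩
  rw [Measure.map_apply hh hK.compl]
  exact measure_mono_null (fun x hx hxS => hx (hmaps hxS)) hμ.2

theorem lintegral_const_of_mem_probOn {S : Set E} {μ : Measure E} (hμ : μ ∈ probOn S)
    (c : ℝ≥0∞) : ∫⁻ _, c ∂(μ.prod μ) = c := by
  have : IsProbabilityMeasure μ := hμ.1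
  simp

end Measurable

variable {E F : Type*} [MeasurableSpace E] [PseudoMetricSpace E]
  [MeasurableSpace F] [PseudoMetricSpace F]

theorem rpow_diam_le_energyOf {p : ℝ} (hp : 0 ≤ p) {K : Set E} (hK : IsBounded K)
    {μ : Measure E} (hμ : μ ∈ probOn K) : ENNReal.ofReal (diam K) ^ (-p) ≤ energyOf p μ :=
  calc ENNReal.ofReal (diam K) ^ (-p) = ∫⁻ _, ENNReal.ofReal (diam K) ^ (-p) ∂(μ.prod μ) :=
        (lintegral_const_of_mem_probOn hμ _).symm
    _ ≤ energyOf p μ := lintegral_mono_ae <| (ae_mem_prod hμ).mono fun _ hz =>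
        ENNReal.rpow_le_rpow_of_nonpos (ENNReal.ofReal_le_ofReal
          (dist_le_diam_of_mem hK hz.1 hz.2)) (neg_nonpos.mpr hp)

theorem energyOf_le_rpow_diam {p : ℝ} (hp : p ≤ 0) {K : Set E} (hK : IsBounded K)
    {μ : Measure E} (hμ : μ ∈ probOn K) : energyOf p μ ≤ ENNReal.ofReal (diam K) ^ (-p) :=
  calc energyOf p μ ≤ ∫⁻ _, ENNReal.ofReal (diam K) ^ (-p) ∂(μ.prod μ) :=
        lintegral_mono_ae <| (ae_mem_prod hμ).mono fun _ hz =>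
          ENNReal.rpow_le_rpow (ENNReal.ofReal_le_ofReal
            (dist_le_diam_of_mem hK hz.1 hz.2)) (neg_nonneg.mpr hp)
    _ = ENNReal.ofReal (diam K) ^ (-p) := lintegral_const_of_mem_probOn hμ _

theorem energy_ne_zero {p : ℝ} (hp : 0 < p) {K : Set E} (hK : IsBounded K) :
    energy p K ≠ 0 := by
  have hpos : 0 < ENNReal.ofReal (diam K) ^ (-p) := by
    rw [ENNReal.rpow_neg]
    exact ENNReal.inv_pos.mpr (ENNReal.rpow_ne_top_of_nonneg hp.le ENNReal.ofReal_ne_top)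
  rw [energy, if_neg hp.not_gt]
  refine (hpos.trans_le ?_).ne'
  exact le_iInf₂ fun _ hμ => rpow_diam_le_energyOf hp.le hK hμ

theorem energy_ne_top {p : ℝ} (hp : p < 0) {K : Set E} (hK : IsBounded K) :
    energy p K ≠ ⊤ := by
  rw [energy, if_pos hp]
  exact ne_top_of_le_ne_top
    (ENNReal.rpow_ne_top_of_nonneg (neg_nonneg.mpr hp.le) ENNReal.ofReal_ne_top)
    (iSup₂_le fun _ hμ => energyOf_le_rpow_diam hp.le hK hμ)

noncomputable def logPos (d : ℝ) : ℝ≥0∞ :=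
  if d = 0 then ⊤ else ENNReal.ofReal (Real.log (1 / d))

noncomputable def logNeg (d : ℝ) : ℝ≥0∞ := ENNReal.ofReal (Real.log d)

theorem logEnergyOf_eq (μ : Measure E) :
    logEnergyOf μ = ((∫⁻ z, logPos (dist z.1 z.2) ∂(μ.prod μ) : ℝ≥0∞) : EReal)
      - ((∫⁻ z, logNeg (dist z.1 z.2) ∂(μ.prod μ) : ℝ≥0∞) : EReal) := rfl

theorem measurable_logPos : Measurable logPos :=
  Measurable.ite (measurableSet_singleton 0) measurable_const
    (measurable_const.div measurable_id).log.ennreal_ofReal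

theorem measurable_logNeg : Measurable logNeg := Real.measurable_log.ennreal_ofReal

theorem logNeg_le_logNeg {d d' : ℝ} (hd : 0 ≤ d) (h : d ≤ d') : logNeg d ≤ logNeg d' := by
  rcases hd.eq_or_lt with rfl | hd
  · simp [logNeg]
  · exact ENNReal.ofReal_le_ofReal (Real.log_le_log hd h)

theorem logPos_add_logNeg_le {r d d' : ℝ} (hr : 0 < r) (hd : 0 ≤ d) (h : r * d ≤ d') :
    logPos d' + logNeg d + ENNReal.ofReal (Real.log r) ≤
      logPos d + logNeg d' + ENNReal.ofReal (-Real.log r) := by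
  rcases hd.eq_or_lt with rfl | hd
  · simp [logPos]
  have hd' : 0 < d' := (mul_pos hr hd).trans_le h
  simp only [logPos, logNeg, if_neg hd.ne', if_neg hd'.ne', one_div, Real.log_inv]
  refine ENNReal.ofReal_neg_add_ofReal_add_ofReal_le ?_
  rw [← Real.log_mul hd.ne' hr.ne']
  exact Real.log_le_log (by positivity) (by linarith)

theorem lintegral_logNeg_le {S : Set E} (hS : IsBounded S) {μ : Measure E}
    (hμ : μ ∈ probOn S) :
    ∫⁻ z, logNeg (dist z.1 z.2) ∂(μ.prod μ) ≤ ENNReal.ofReal (Real.log (diam S)) :=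
  calc ∫⁻ z, logNeg (dist z.1 z.2) ∂(μ.prod μ)
      ≤ ∫⁻ _, logNeg (diam S) ∂(μ.prod μ) :=
        lintegral_mono_ae <| (ae_mem_prod hμ).mono fun _ hz =>
          logNeg_le_logNeg dist_nonneg (dist_le_diam_of_mem hS hz.1 hz.2)
    _ = ENNReal.ofReal (Real.log (diam S)) := lintegral_const_of_mem_probOn hμ _

theorem neg_le_logEnergyOf {S : Set E} (hS : IsBounded S) {μ : Measure E}
    (hμ : μ ∈ probOn S) :
    -((ENNReal.ofReal (Real.log (diam S)) : ℝ≥0∞) : EReal) ≤ logEnergyOf μ := by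
  rw [logEnergyOf_eq, sub_eq_add_neg]
  calc -((ENNReal.ofReal (Real.log (diam S)) : ℝ≥0∞) : EReal)
      ≤ -((∫⁻ z, logNeg (dist z.1 z.2) ∂(μ.prod μ) : ℝ≥0∞) : EReal) :=
        EReal.neg_le_neg_iff.mpr (EReal.coe_ennreal_le_coe_ennreal_iff.mpr
          (lintegral_logNeg_le hS hμ))
    _ ≤ _ := le_add_of_nonneg_left (EReal.coe_ennreal_nonneg _)

theorem logEnergy_ne_bot {S : Set E} (hS : IsBounded S) : logEnergy S ≠ ⊥ := by
  refine ne_bot_of_le_ne_bot ?_ (le_iInf₂ fun _ hμ => neg_le_logEnergyOf hS hμ)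
  rw [← EReal.coe_ennreal_toReal ENNReal.ofReal_ne_top, ← EReal.coe_neg]
  exact EReal.coe_ne_bot _

theorem cap_nonneg (p : ℝ) (K : Set E) : 0 ≤ cap p K := by
  rw [cap]
  split_ifs
  exacts [le_rfl, (Real.exp_pos _).le, Real.rpow_nonneg ENNReal.toReal_nonneg _]

variable [OpensMeasurableSpace E] [SecondCountableTopology E]
  [OpensMeasurableSpace F] [SecondCountableTopology F]

theorem measurable_rieszKernel (p : ℝ) :
    Measurable fun z : E × E => ENNReal.ofReal (dist z.1 z.2) ^ (-p) :=
  measurable_dist.ennreal_ofReal.pow_const _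

structure IsExpandingMap (r : ℝ) (h : E → F) (S : Set E) (K : Set F) : Prop where
  measurable : Measurable h
  mapsTo : MapsTo h S K
  mul_dist_le : ∀ s ∈ S, ∀ t ∈ S, r * dist s t ≤ dist (h s) (h t)

namespace IsExpandingMap

variable {r : ℝ} {h : E → F} {S : Set E} {K : Set F}

theorem energyOf_map_le (he : IsExpandingMap r h S K) (hr : 0 ≤ r) {p : ℝ} (hp : 0 ≤ p)
    {μ : Measure E} (hμ : μ ∈ probOn S) :
    energyOf p (μ.map h) ≤ ENNReal.ofReal r ^ (-p) * energyOf p μ := by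
  have : IsProbabilityMeasure μ := hμ.1
  rw [energyOf, energyOf, lintegral_prod_map_map he.measurable (measurable_rieszKernel p),
    ← lintegral_const_mul _ (measurable_rieszKernel p)]
  refine lintegral_mono_ae ((ae_mem_prod hμ).mono fun z hz => ?_)
  calc ENNReal.ofReal (dist (h z.1) (h z.2)) ^ (-p)
      ≤ ENNReal.ofReal (r * dist z.1 z.2) ^ (-p) :=
        ENNReal.rpow_le_rpow_of_nonpos
          (ENNReal.ofReal_le_ofReal (he.mul_dist_le _ hz.1 _ hz.2)) (neg_nonpos.mpr hp)
    _ = ENNReal.ofReal r ^ (-p) * ENNReal.ofReal (dist z.1 z.2) ^ (-p) := by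
        rw [ENNReal.ofReal_mul hr,
          ENNReal.mul_rpow_of_ne_top ENNReal.ofReal_ne_top ENNReal.ofReal_ne_top]

theorem energyOf_map_ge (he : IsExpandingMap r h S K) (hr : 0 ≤ r) {p : ℝ} (hp : p ≤ 0)
    {μ : Measure E} (hμ : μ ∈ probOn S) :
    ENNReal.ofReal r ^ (-p) * energyOf p μ ≤ energyOf p (μ.map h) := by
  have : IsProbabilityMeasure μ := hμ.1
  rw [energyOf, energyOf, lintegral_prod_map_map he.measurable (measurable_rieszKernel p),
    ← lintegral_const_mul _ (measurable_rieszKernel p)]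
  refine lintegral_mono_ae ((ae_mem_prod hμ).mono fun z hz => ?_)
  calc ENNReal.ofReal r ^ (-p) * ENNReal.ofReal (dist z.1 z.2) ^ (-p)
      = ENNReal.ofReal (r * dist z.1 z.2) ^ (-p) := by
        rw [ENNReal.ofReal_mul hr, ENNReal.mul_rpow_of_nonneg _ _ (neg_nonneg.mpr hp)]
    _ ≤ ENNReal.ofReal (dist (h z.1) (h z.2)) ^ (-p) :=
        ENNReal.rpow_le_rpow (ENNReal.ofReal_le_ofReal (he.mul_dist_le _ hz.1 _ hz.2))
          (neg_nonneg.mpr hp)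

theorem energy_le (he : IsExpandingMap r h S K) (hr : 0 < r) (hK : MeasurableSet K) {p : ℝ}
    (hp : 0 ≤ p) : energy p K ≤ ENNReal.ofReal r ^ (-p) * energy p S := by
  have hr' : ENNReal.ofReal r ≠ 0 := (ENNReal.ofReal_pos.mpr hr).ne'
  simp only [energy, if_neg hp.not_gt, ENNReal.mul_iInf_of_ne
    (ENNReal.rpow_pos (pos_iff_ne_zero.mpr hr') ENNReal.ofReal_ne_top).ne'
    (ENNReal.rpow_ne_top_of_ne_zero hr' ENNReal.ofReal_ne_top)]
  exact le_iInf₂ fun μ hμ => iInf₂_le_of_le _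
    (map_mem_probOn he.measurable he.mapsTo hK hμ) (he.energyOf_map_le hr.le hp hμ)

theorem energy_ge (he : IsExpandingMap r h S K) (hr : 0 ≤ r) (hK : MeasurableSet K) {p : ℝ}
    (hp : p < 0) : ENNReal.ofReal r ^ (-p) * energy p S ≤ energy p K := by
  simp only [energy, if_pos hp, ENNReal.mul_iSup]
  exact iSup₂_le fun μ hμ => le_iSup₂_of_le _
    (map_mem_probOn he.measurable he.mapsTo hK hμ) (he.energyOf_map_ge hr hp.le hμ)

theorem logEnergyOf_map_le (he : IsExpandingMap r h S K) (hr : 0 < r) (hS : IsBounded S)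
    {μ : Measure E} (hμ : μ ∈ probOn S) :
    logEnergyOf (μ.map h) ≤ logEnergyOf μ + ((-Real.log r : ℝ) : EReal) := by
  have : IsProbabilityMeasure μ := hμ.1
  have hpos : Measurable fun z : F × F => logPos (dist z.1 z.2) :=
    measurable_logPos.comp measurable_dist
  have hneg : Measurable fun z : F × F => logNeg (dist z.1 z.2) :=
    measurable_logNeg.comp measurable_dist
  rw [logEnergyOf_eq, logEnergyOf_eq, lintegral_prod_map_map he.measurable hpos,
    lintegral_prod_map_map he.measurable hneg]
  dsimp only
  refine EReal.coe_ennreal_sub_le_of_add_le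
    (ne_top_of_le_ne_top ENNReal.ofReal_ne_top (lintegral_logNeg_le hS hμ)) ?_
  rw [← lintegral_add_add_const _ (g := fun z : E × E => logNeg (dist z.1 z.2))
      (measurable_logNeg.comp measurable_dist),
    ← lintegral_add_add_const _ (g := fun z : E × E => logNeg (dist (h z.1) (h z.2)))
      (hneg.comp (he.measurable.prodMap he.measurable))]
  exact lintegral_mono_ae <| (ae_mem_prod hμ).mono fun z hz =>
    logPos_add_logNeg_le hr dist_nonneg (he.mul_dist_le _ hz.1 _ hz.2)

theorem logEnergy_le (he : IsExpandingMap r h S K) (hr : 0 < r) (hS : IsBounded S)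
    (hK : MeasurableSet K) : logEnergy K ≤ logEnergy S + ((-Real.log r : ℝ) : EReal) := by
  rw [← EReal.sub_le_iff_le_add (.inl (EReal.coe_ne_bot _)) (.inl (EReal.coe_ne_top _))]
  refine le_iInf₂ fun μ hμ => ?_
  rw [EReal.sub_le_iff_le_add (.inl (EReal.coe_ne_bot _)) (.inl (EReal.coe_ne_top _))]
  exact (iInf₂_le _ (map_mem_probOn he.measurable he.mapsTo hK hμ)).trans
    (he.logEnergyOf_map_le hr hS hμ)

theorem mul_cap_le_cap_of_pos (he : IsExpandingMap r h S K) (hr : 0 < r) (hK : IsBounded K)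
    (hKm : MeasurableSet K) {p : ℝ} (hp : 0 < p) : r * cap p S ≤ cap p K := by
  have hle := he.energy_le hr hKm hp.le
  rw [cap, if_neg hp.ne', cap, if_neg hp.ne']
  by_cases hS : energy p S = ⊤
  · rw [hS, ENNReal.toReal_top, Real.zero_rpow (by simp [hp.ne']), mul_zero]
    exact Real.rpow_nonneg ENNReal.toReal_nonneg _
  have hC : ENNReal.ofReal r ^ (-p) * energy p S ≠ ⊤ :=
    ENNReal.mul_ne_top (ENNReal.rpow_ne_top_of_ne_zero (ENNReal.ofReal_pos.mpr hr).ne'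
      ENNReal.ofReal_ne_top) hS
  rw [← Real.rpow_neg_mul_rpow_neg_one_div hr ENNReal.toReal_nonneg hp.ne',
    ← toReal_ofReal_rpow_mul hr.le]
  exact Real.rpow_le_rpow_of_nonpos
    (ENNReal.toReal_pos (energy_ne_zero hp hK) (ne_top_of_le_ne_top hC hle))
    (ENNReal.toReal_mono hC hle) (div_nonpos_of_nonpos_of_nonneg (by norm_num) hp.le)

theorem mul_cap_le_cap_of_neg (he : IsExpandingMap r h S K) (hr : 0 < r) (hK : IsBounded K)
    (hKm : MeasurableSet K) {p : ℝ} (hp : p < 0) : r * cap p S ≤ cap p K := by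
  rw [cap, if_neg hp.ne, cap, if_neg hp.ne,
    ← Real.rpow_neg_mul_rpow_neg_one_div hr ENNReal.toReal_nonneg hp.ne,
    ← toReal_ofReal_rpow_mul hr.le]
  exact Real.rpow_le_rpow ENNReal.toReal_nonneg
    (ENNReal.toReal_mono (energy_ne_top hp hK) (he.energy_ge hr.le hKm hp))
    (div_nonneg_of_nonpos (by norm_num) hp.le)

theorem mul_cap_zero_le_cap_zero (he : IsExpandingMap r h S K) (hr : 0 < r) (hS : IsBounded S)
    (hK : IsBounded K) (hKm : MeasurableSet K) : r * cap 0 S ≤ cap 0 K := by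
  have hle := he.logEnergy_le hr hS hKm
  by_cases hStop : logEnergy S = ⊤
  · rw [cap, if_pos rfl, if_pos hStop, mul_zero]
    exact cap_nonneg 0 K
  obtain ⟨v, hv⟩ : ∃ v : ℝ, logEnergy S = v :=
    ⟨_, (EReal.coe_toReal hStop (logEnergy_ne_bot hS)).symm⟩
  rw [hv, ← EReal.coe_add] at hle
  have hKtop : logEnergy K ≠ ⊤ := ne_top_of_le_ne_top (EReal.coe_ne_top _) hle
  have hKle := EReal.toReal_le_toReal hle (logEnergy_ne_bot hK) (EReal.coe_ne_top _)
  rw [EReal.toReal_coe] at hKle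
  rw [cap, if_pos rfl, if_neg hStop, cap, if_pos rfl, if_neg hKtop, hv, EReal.toReal_coe]
  calc r * Real.exp (-v) = Real.exp (-(v + -Real.log r)) := by
        rw [neg_add, neg_neg, Real.exp_add, Real.exp_log hr, mul_comm]
    _ ≤ Real.exp (-(logEnergy K).toReal) := Real.exp_le_exp.mpr (neg_le_neg hKle)

theorem mul_cap_le_cap (he : IsExpandingMap r h S K) (hr : 0 < r) (hS : IsBounded S)
    (hK : IsBounded K) (hKm : MeasurableSet K) (p : ℝ) : r * cap p S ≤ cap p K := by
  rcases lt_trichotomy p 0 with hp | rfl | hp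
  exacts [he.mul_cap_le_cap_of_neg hr hK hKm hp, he.mul_cap_zero_le_cap_zero hr hS hK hKm,
    he.mul_cap_le_cap_of_pos hr hK hKm hp]

end IsExpandingMap

end Riesz

section Quantile

variable {K : Set ℝ}

noncomputable def cumLength (K : Set ℝ) (x : ℝ) : ℝ := (volume (K ∩ Iic x)).toReal

/-- Clamping at `λ(K)` keeps the defining set nonempty, so that `quantile K` is monotone on all
of `ℝ`. -/
noncomputable def quantile (K : Set ℝ) (c : ℝ) : ℝ :=
  sInf {x ∈ K | min c (volume K).toReal ≤ cumLength K x}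

theorem cumLength_le_add_dist (hK : volume K ≠ ⊤) (x y : ℝ) :
    cumLength K x ≤ cumLength K y + dist x y := by
  have hfin : volume (K ∩ Iic y) ≠ ⊤ := measure_ne_top_of_subset inter_subset_left hK
  have hsub : K ∩ Iic x ⊆ (K ∩ Iic y) ∪ Ioc y x := fun z ⟨hzK, hzx⟩ =>
    (le_or_gt z y).imp (fun hzy => ⟨hzK, hzy⟩) (fun hyz => ⟨hyz, hzx⟩)
  have hle : volume (K ∩ Iic x) ≤ volume (K ∩ Iic y) + ENNReal.ofReal (x - y) :=
    (measure_mono hsub).trans ((measure_union_le _ _).trans_eq (by rw [Real.volume_Ioc]))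
  calc cumLength K x ≤ cumLength K y + max (x - y) 0 := by
        rw [cumLength, cumLength, ← ENNReal.toReal_ofReal' (r := x - y),
          ← ENNReal.toReal_add hfin ENNReal.ofReal_ne_top]
        exact ENNReal.toReal_mono (by finiteness) hle
    _ ≤ cumLength K y + dist x y := by
        rw [Real.dist_eq]
        gcongr
        exact max_le (le_abs_self _) (abs_nonneg _)

theorem lipschitzWith_cumLength (hK : volume K ≠ ⊤) : LipschitzWith 1 (cumLength K) :=
  .of_le_add (cumLength_le_add_dist hK)

theorem cumLength_sSup (hK : IsCompact K) : cumLength K (sSup K) = (volume K).toReal := by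
  rw [cumLength, inter_eq_self_of_subset_left
    (show K ⊆ Iic (sSup K) from fun _ hx => le_csSup hK.bddAbove hx)]

theorem exists_mem_le_cumLength_eq (hK : IsCompact K) {x : ℝ} (hx : (K ∩ Iic x).Nonempty) :
    ∃ y ∈ K, y ≤ x ∧ cumLength K y = cumLength K x := by
  have hc : IsCompact (K ∩ Iic x) := hK.inter_right isClosed_Iic
  obtain ⟨hyK, hyx⟩ := hc.sSup_mem hx
  refine ⟨_, hyK, hyx, congrArg (fun s => (volume s).toReal) ?_⟩
  refine Subset.antisymm (inter_subset_inter_right _ (Iic_subset_Iic.mpr hyx))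
    fun z hz => ⟨hz.1, le_csSup hc.bddAbove hz⟩

theorem isCompact_quantileSet (hK : IsCompact K) (c : ℝ) :
    IsCompact {x ∈ K | min c (volume K).toReal ≤ cumLength K x} :=
  hK.inter_right (isClosed_le continuous_const
    (lipschitzWith_cumLength hK.measure_lt_top.ne).continuous)

theorem quantileSet_nonempty (hK : IsCompact K) (hne : K.Nonempty) (c : ℝ) :
    {x ∈ K | min c (volume K).toReal ≤ cumLength K x}.Nonempty :=
  ⟨sSup K, hK.sSup_mem hne, (cumLength_sSup hK).symm ▸ min_le_right _ _⟩

theorem quantile_mem (hK : IsCompact K) (hne : K.Nonempty) (c : ℝ) :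
    quantile K c ∈ K ∧ min c (volume K).toReal ≤ cumLength K (quantile K c) :=
  (isCompact_quantileSet hK c).sInf_mem (quantileSet_nonempty hK hne c)

theorem quantile_monotone (hK : IsCompact K) (hne : K.Nonempty) : Monotone (quantile K) :=
  fun _ d hcd => csInf_le_csInf (isCompact_quantileSet hK _).bddBelow
    (quantileSet_nonempty hK hne d)
    fun _ hx => ⟨hx.1, (min_le_min_right _ hcd).trans hx.2⟩

theorem cumLength_quantile (hK : IsCompact K) (hne : K.Nonempty) {c : ℝ}
    (hc : c ∈ Icc 0 (volume K).toReal) : cumLength K (quantile K c) = c := by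
  obtain ⟨hqK, hq⟩ := quantile_mem hK hne c
  rw [min_eq_left hc.2] at hq
  refine le_antisymm (not_lt.mp fun hlt => ?_) hq
  -- Some `x < quantile K c` still has cumulative length `> c`; the last point of `K` below `x`
  -- then belongs to the set whose infimum is `quantile K c`, which is absurd.
  have hev : ∀ᶠ x in 𝓝[<] quantile K c, c < cumLength K x :=
    ((lipschitzWith_cumLength hK.measure_lt_top.ne).continuous.continuousAt.eventually
      (lt_mem_nhds hlt)).filter_mono nhdsWithin_le_nhds
  obtain ⟨x, hxc, hxq⟩ := (hev.and self_mem_nhdsWithin).exists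
  have hxne : (K ∩ Iic x).Nonempty := nonempty_of_measure_ne_zero fun h0 => by
    rw [cumLength, h0, ENNReal.toReal_zero] at hxc
    exact hxc.not_ge hc.1
  obtain ⟨y, hyK, hyx, hy⟩ := exists_mem_le_cumLength_eq hK hxne
  have hqy : quantile K c ≤ y := csInf_le (isCompact_quantileSet hK c).bddBelow
    ⟨hyK, by rw [hy, min_eq_left hc.2]; exact hxc.le⟩
  exact (hqy.trans hyx).not_gt hxq

theorem dist_le_dist_quantile (hK : IsCompact K) (hne : K.Nonempty) {s t : ℝ}
    (hs : s ∈ Icc 0 (volume K).toReal) (ht : t ∈ Icc 0 (volume K).toReal) :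
    dist s t ≤ dist (quantile K s) (quantile K t) := by
  have h := (lipschitzWith_cumLength hK.measure_lt_top.ne).dist_le_mul
    (quantile K s) (quantile K t)
  rwa [cumLength_quantile hK hne hs, cumLength_quantile hK hne ht, NNReal.coe_one, one_mul] at h

theorem isExpandingMap_quantile (hK : IsCompact K) (hne : K.Nonempty) :
    Riesz.IsExpandingMap ((volume K).toReal / 2)
      (fun t => quantile K ((t + 1) * (volume K).toReal / 2)) (Icc (-1) 1) K := by
  have hL : 0 ≤ (volume K).toReal := ENNReal.toReal_nonneg
  have hrescale : MapsTo (fun t : ℝ => (t + 1) * (volume K).toReal / 2) (Icc (-1) 1)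
      (Icc 0 (volume K).toReal) := fun t ht =>
    ⟨by nlinarith [ht.1], by nlinarith [ht.2]⟩
  have hmono : Monotone fun t => quantile K ((t + 1) * (volume K).toReal / 2) :=
    (quantile_monotone hK hne).comp fun s t hst => by gcongr
  refine ⟨hmono.measurable, fun t _ => (quantile_mem hK hne _).1, fun s hs t ht => ?_⟩
  refine le_trans (le_of_eq ?_) (dist_le_dist_quantile hK hne (hrescale hs) (hrescale ht))
  rw [Real.dist_eq, Real.dist_eq, ← abs_of_nonneg (by positivity : 0 ≤ (volume K).toReal / 2),
    ← abs_mul]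
  ring_nf

end Quantile

theorem statement0_general (p : ℝ) (K : Set ℝ) (hK : IsCompact K) :
    Riesz.cap p K ≥ (Riesz.cap p (Set.Icc (-1 : ℝ) 1) / 2) * (volume K).toReal := by
  rcases ENNReal.toReal_nonneg.eq_or_lt with hL | hL
  · rw [← hL, mul_zero]
    exact Riesz.cap_nonneg p K
  have hne : K.Nonempty := nonempty_of_measure_ne_zero (ENNReal.toReal_pos_iff.mp hL).1.ne'
  have := (isExpandingMap_quantile hK hne).mul_cap_le_cap (half_pos hL) (isBounded_Icc (-1) 1)
    hK.isBounded hK.isClosed.measurableSet p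
  linarith

/-- Among compact subsets of `ℝ` of given length, the closed interval minimizes Riesz
`p`-capacity: for `p < 1`, `cap_p(K) ≥ (cap_p([-1,1])/2) ⬝ λ(K)`. -/
theorem statement0 (p : ℝ) (hp : p < 1) (K : Set ℝ) (hK : IsCompact K) :
    Riesz.cap p K ≥ (Riesz.cap p (Set.Icc (-1 : ℝ) 1) / 2) * (volume K).toReal :=
  statement0_general p K hK
end

section
/- Let p ≤ −1 and q ≤ −1. If K ⊆ ℝ is compact and contains more than one point, then cap_q(K)/cap_p(K) = 2^{1/q − 1/p}. -/
open MeasureTheory Metric Set ENNReal Filter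

/-!
Write `s = -p ≥ 1` and `d = diam K`. The measure `(δ_{min K} + δ_{max K}) / 2` has energy
`d^s / 2`. Conversely, if `μ` lives on `[a, b]` then `|x - y|^s ≤ (b - a)^(s-1) |x - y|`, and
integrating `(b - a) |x - y| ≤ (x - a)(b - y) + (b - x)(y - a)` against `μ ⊗ μ` bounds
`(b - a) ∬ |x - y|` by `2 A B ≤ (A + B)² / 2 = (b - a)² / 2`, where `A = ∫ (x - a)` and
`B = ∫ (b - x)`. Hence `V_p(K) = d^{-p} / 2` and `cap_p(K) = d · 2^{1/p}` for every `p ≤ -1`.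
-/

protected lemma ENNReal.four_mul_le_sq_add (a b : ℝ≥0∞) : 4 * a * b ≤ (a + b) ^ 2 := by
  rcases eq_or_ne a ⊤ with rfl | ha
  · rcases eq_or_ne b 0 with rfl | hb <;> simp [*]
  rcases eq_or_ne b ⊤ with rfl | hb
  · rcases eq_or_ne a 0 with rfl | ha' <;> simp [*]
  lift a to NNReal using ha
  lift b to NNReal using hb
  exact_mod_cast _root_.four_mul_le_sq_add a b

protected lemma ENNReal.rpow_eq_rpow_sub_one_mul (x : ℝ≥0∞) {s : ℝ} (hs : 1 ≤ s) :
    x ^ s = x ^ (s - 1) * x := by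
  conv_lhs => rw [← sub_add_cancel s 1]
  rw [ENNReal.rpow_add_of_nonneg _ _ (by linarith) zero_le_one, ENNReal.rpow_one]

lemma sub_mul_abs_sub_le {a b x y : ℝ} (hx : x ∈ Icc a b) (hy : y ∈ Icc a b) :
    (b - a) * |x - y| ≤ (x - a) * (b - y) + (b - x) * (y - a) := by
  obtain ⟨hax, hxb⟩ := hx
  obtain ⟨hay, hyb⟩ := hy
  rcases le_total x y with hxy | hxy
  · rw [abs_of_nonpos (sub_nonpos.2 hxy)]
    nlinarith [mul_nonneg (sub_nonneg.2 hax) (sub_nonneg.2 hyb)]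
  · rw [abs_of_nonneg (sub_nonneg.2 hxy)]
    nlinarith [mul_nonneg (sub_nonneg.2 hay) (sub_nonneg.2 hxb)]

lemma lintegral_ofReal_dist_le {μ : Measure ℝ} [IsProbabilityMeasure μ] {a b : ℝ} (hab : a < b)
    (hμ : ∀ᵐ x ∂μ, x ∈ Icc a b) :
    ∫⁻ z, ENNReal.ofReal (dist z.1 z.2) ∂μ.prod μ ≤ ENNReal.ofReal (b - a) / 2 := by
  set A := ∫⁻ x, ENNReal.ofReal (x - a) ∂μ
  set B := ∫⁻ x, ENNReal.ofReal (b - x) ∂μ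
  set I := ∫⁻ z, ENNReal.ofReal (dist z.1 z.2) ∂μ.prod μ
  have hAB : A + B = ENNReal.ofReal (b - a) := by
    rw [← lintegral_add_left (by fun_prop)]
    calc ∫⁻ x, ENNReal.ofReal (x - a) + ENNReal.ofReal (b - x) ∂μ
        = ∫⁻ _, ENNReal.ofReal (b - a) ∂μ := by
          refine lintegral_congr_ae (hμ.mono fun x hx => ?_)
          dsimp only
          rw [← ENNReal.ofReal_add (sub_nonneg.2 hx.1) (sub_nonneg.2 hx.2), sub_add_sub_cancel']
      _ = ENNReal.ofReal (b - a) := by simp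
  have hμ2 : ∀ᵐ z ∂μ.prod μ, z.1 ∈ Icc a b ∧ z.2 ∈ Icc a b :=
    (Measure.quasiMeasurePreserving_fst.ae hμ).and (Measure.quasiMeasurePreserving_snd.ae hμ)
  have hI : ENNReal.ofReal (b - a) * I ≤ 2 * (A * B) := by
    rw [← lintegral_const_mul _ (by fun_prop)]
    calc ∫⁻ z, ENNReal.ofReal (b - a) * ENNReal.ofReal (dist z.1 z.2) ∂μ.prod μ
        ≤ ∫⁻ z, ENNReal.ofReal (z.1 - a) * ENNReal.ofReal (b - z.2) +
            ENNReal.ofReal (b - z.1) * ENNReal.ofReal (z.2 - a) ∂μ.prod μ := by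
          refine lintegral_mono_ae (hμ2.mono fun z ⟨h1, h2⟩ => ?_)
          rw [← ENNReal.ofReal_mul (sub_nonneg.2 hab.le), ← ENNReal.ofReal_mul (sub_nonneg.2 h1.1),
            ← ENNReal.ofReal_mul (sub_nonneg.2 h1.2),
            ← ENNReal.ofReal_add (by nlinarith [h1.1, h2.2]) (by nlinarith [h1.2, h2.1])]
          exact ENNReal.ofReal_le_ofReal (sub_mul_abs_sub_le h1 h2)
      _ = 2 * (A * B) := by
          rw [lintegral_add_left (by fun_prop),
            lintegral_prod_mul (f := fun x => ENNReal.ofReal (x - a))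
              (g := fun y => ENNReal.ofReal (b - y)) (by fun_prop) (by fun_prop),
            lintegral_prod_mul (f := fun x => ENNReal.ofReal (b - x))
              (g := fun y => ENNReal.ofReal (y - a)) (by fun_prop) (by fun_prop),
            mul_comm B, two_mul]
  have hd : ENNReal.ofReal (b - a) ≠ 0 := by simpa using hab
  rw [ENNReal.le_div_iff_mul_le (by simp) (by simp), mul_comm,
    ← ENNReal.mul_le_mul_iff_right hd ENNReal.ofReal_ne_top]
  calc ENNReal.ofReal (b - a) * (2 * I) = 2 * (ENNReal.ofReal (b - a) * I) := by ring
    _ ≤ 2 * (2 * (A * B)) := by gcongr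
    _ = 4 * A * B := by ring
    _ ≤ (A + B) ^ 2 := ENNReal.four_mul_le_sq_add A B
    _ = ENNReal.ofReal (b - a) * ENNReal.ofReal (b - a) := by rw [hAB, sq]

namespace Riesz

variable {E : Type*} [MeasurableSpace E]

lemma ae_mem_of_mem_probOn {K : Set E} {μ : Measure E} (hμ : μ ∈ probOn K) : ∀ᵐ x ∂μ, x ∈ K :=
  ae_iff.2 hμ.2

lemma half_smul_dirac_add_dirac_mem_probOn [MeasurableSingletonClass E] {K : Set E} {x y : E}
    (hx : x ∈ K) (hy : y ∈ K) :
    (2⁻¹ : ℝ≥0∞) • (Measure.dirac x + Measure.dirac y) ∈ probOn K := by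
  refine ⟨⟨?_⟩, ?_⟩
  · simp [ENNReal.inv_two_add_inv_two]
  · simp [hx, hy]

section PseudoMetricSpace

variable [PseudoMetricSpace E]

lemma energyOf_le_energy {p : ℝ} (hp : p < 0) {K : Set E} {μ : Measure E}
    (hμ : μ ∈ probOn K) : energyOf p μ ≤ energy p K := by
  rw [energy, if_pos hp]
  exact le_biSup (energyOf p) hμ

lemma energyOf_half_smul_dirac_add_dirac [MeasurableSingletonClass E] {p : ℝ} (hp : p < 0)
    (x y : E) :
    energyOf p ((2⁻¹ : ℝ≥0∞) • (Measure.dirac x + Measure.dirac y)) =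
      ENNReal.ofReal (dist x y) ^ (-p) / 2 := by
  rw [energyOf, Measure.prod_smul_left, Measure.prod_smul_right]
  simp only [Measure.prod_add, Measure.add_prod, Measure.dirac_prod_dirac, lintegral_smul_measure,
    lintegral_add_measure, lintegral_dirac, dist_self, ENNReal.ofReal_zero,
    ENNReal.zero_rpow_of_pos (neg_pos.2 hp), dist_comm y x, add_zero, zero_add, smul_eq_mul]
  rw [← two_mul, ENNReal.inv_mul_cancel_left two_ne_zero ofNat_ne_top, ENNReal.div_eq_inv_mul]

lemma ofReal_dist_rpow_div_two_le_energy [MeasurableSingletonClass E] {p : ℝ} (hp : p < 0)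
    {K : Set E} {x y : E} (hx : x ∈ K) (hy : y ∈ K) :
    ENNReal.ofReal (dist x y) ^ (-p) / 2 ≤ energy p K :=
  energyOf_half_smul_dirac_add_dirac hp x y ▸
    energyOf_le_energy hp (half_smul_dirac_add_dirac_mem_probOn hx hy)

end PseudoMetricSpace

lemma energyOf_neg_le_of_mem_probOn_Icc {s : ℝ} (hs : 1 ≤ s) {a b : ℝ} (hab : a < b)
    {μ : Measure ℝ} (hμ : μ ∈ probOn (Icc a b)) :
    energyOf (-s) μ ≤ ENNReal.ofReal (b - a) ^ s / 2 := by
  have : IsProbabilityMeasure μ := hμ.1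
  have hμ' := ae_mem_of_mem_probOn hμ
  have hdist : ∀ᵐ z ∂μ.prod μ, dist z.1 z.2 ≤ b - a :=
    ((Measure.quasiMeasurePreserving_fst.ae hμ').and
      (Measure.quasiMeasurePreserving_snd.ae hμ')).mono fun z hz =>
      Real.dist_le_of_mem_Icc hz.1 hz.2
  set d := ENNReal.ofReal (b - a)
  calc energyOf (-s) μ
      ≤ ∫⁻ z, d ^ (s - 1) * ENNReal.ofReal (dist z.1 z.2) ∂μ.prod μ := by
        rw [energyOf, neg_neg]
        refine lintegral_mono_ae (hdist.mono fun z hz => ?_)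
        have : ENNReal.ofReal (dist z.1 z.2) ≤ d := ENNReal.ofReal_le_ofReal hz
        rw [ENNReal.rpow_eq_rpow_sub_one_mul _ hs]
        gcongr
    _ = d ^ (s - 1) * ∫⁻ z, ENNReal.ofReal (dist z.1 z.2) ∂μ.prod μ :=
        lintegral_const_mul _ (by fun_prop)
    _ ≤ d ^ (s - 1) * (d / 2) := by grw [lintegral_ofReal_dist_le hab hμ']
    _ = d ^ s / 2 := by rw [mul_div_assoc', ← ENNReal.rpow_eq_rpow_sub_one_mul _ hs]

lemma energy_neg_le_of_subset_Icc {s : ℝ} (hs : 1 ≤ s) {a b : ℝ} (hab : a < b) {K : Set ℝ}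
    (hK : K ⊆ Icc a b) : energy (-s) K ≤ ENNReal.ofReal (b - a) ^ s / 2 := by
  rw [energy, if_pos (by linarith)]
  exact iSup₂_le fun μ hμ =>
    energyOf_neg_le_of_mem_probOn_Icc hs hab
      ⟨hμ.1, measure_mono_null (compl_subset_compl.2 hK) hμ.2⟩

lemma energy_neg_eq_diam_rpow_div_two {s : ℝ} (hs : 1 ≤ s) {K : Set ℝ} (hK : IsCompact K)
    (hK2 : K.Nontrivial) : energy (-s) K = ENNReal.ofReal (diam K) ^ s / 2 := by
  have hdiam : diam K = sSup K - sInf K := Real.diam_eq hK.isBounded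
  have hInf := hK.sInf_mem hK2.nonempty
  have hSup := hK.sSup_mem hK2.nonempty
  apply le_antisymm
  · rw [hdiam]
    refine energy_neg_le_of_subset_Icc hs ?_ fun x hx =>
      ⟨csInf_le hK.bddBelow hx, le_csSup hK.bddAbove hx⟩
    linarith [diam_pos hK2 hK.isBounded]
  · have := ofReal_dist_rpow_div_two_le_energy (p := -s) (by linarith) hSup hInf
    rwa [neg_neg, Real.dist_eq, abs_of_nonneg (by linarith [diam_nonneg (s := K)]), ← hdiam] at this

lemma cap_eq_diam_mul {p : ℝ} (hp : p ≤ -1) {K : Set ℝ} (hK : IsCompact K)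
    (hK2 : K.Nontrivial) : cap p K = diam K * 2 ^ (1 / p) := by
  have hd := diam_nonneg (s := K)
  have hp0 : p ≠ 0 := by linarith
  rw [cap, if_neg hp0, ← neg_neg p, energy_neg_eq_diam_rpow_div_two (by linarith) hK hK2,
    ENNReal.toReal_div, ← ENNReal.toReal_rpow, ENNReal.toReal_ofReal hd, ENNReal.toReal_ofNat,
    Real.div_rpow (by positivity) zero_le_two, ← Real.rpow_mul hd, neg_neg,
    div_eq_mul_inv, ← Real.rpow_neg zero_le_two]
  rw [show -p * (-1 / p) = 1 by field_simp, Real.rpow_one, show -(-1 / p) = 1 / p by ring]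

end Riesz

/-- For `p, q ≤ -1` and compact `K ⊆ ℝ` with more than one point,
`cap_q(K)/cap_p(K) = 2^(1/q - 1/p)`. -/
theorem statement3 (p q : ℝ) (hp : p ≤ -1) (hq : q ≤ -1)
    (K : Set ℝ) (hK : IsCompact K) (hK2 : K.Nontrivial) :
    Riesz.cap q K / Riesz.cap p K = (2 : ℝ) ^ (1 / q - 1 / p) := by
  rw [Riesz.cap_eq_diam_mul hp hK hK2, Riesz.cap_eq_diam_mul hq hK hK2,
    mul_div_mul_left _ _ (diam_pos hK2 hK.isBounded).ne', ← Real.rpow_sub zero_lt_two]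
end

section
/- Let p < 0 and t = |p| = −p. If T ⊂ ℝ² is a three-point set with pairwise distances a, b, c between its points, where 0 < a, b ≤ c, then cap_p(T) = 2^{−1/t} c when a^t + b^t ≤ c^t, and cap_p(T) = 2^{1/t} a b c / (4(ab)^t − (a^t + b^t − c^t)²)^{1/t} when a^t + b^t > c^t. Moreover, the p-equilibrium measure on T is unique. -/
open MeasureTheory Metric Set ENNReal Filter

/-!
A probability measure on `{x, y, z}` is determined by its three weights `(u, v, s)`, and its
`p`-energy is the quadratic form `2 (c^t u v + a^t v s + b^t s u)` on the standard simplex.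
If `a^t + b^t ≤ c^t`, a sum of squares shows that this form is maximal, with value `c^t / 2`, only
at `(1/2, 1/2, 0)`. Otherwise its only maximizer is the interior critical point given by the
Lagrange conditions, with value `2 a^t b^t c^t / D` where `D = 4 (ab)^t - (a^t + b^t - c^t)^2 > 0`.
The capacity is the `t`-th root of the maximal energy.
-/

open Function

def IsUniqueMaxOn {α β : Type*} [Preorder β] (f : α → β) (s : Set α) (a : α) : Prop :=
  a ∈ s ∧ ∀ x ∈ s, x ≠ a → f x < f a

theorem IsUniqueMaxOn.le {α β : Type*} [PartialOrder β] {f : α → β} {s : Set α} {a : α}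
    (h : IsUniqueMaxOn f s a) {x : α} (hx : x ∈ s) : f x ≤ f a := by
  rcases eq_or_ne x a with rfl | hne
  · exact le_rfl
  · exact (h.2 x hx hne).le

namespace Riesz

section Abstract

variable {E : Type*} [MeasurableSpace E] [PseudoMetricSpace E] {p : ℝ} {K : Set E}

theorem energy_eq_and_existsUnique_isEquilibrium (hp : p < 0) {μ₀ : Measure E}
    (hμ₀ : μ₀ ∈ probOn K) (hle : ∀ μ ∈ probOn K, energyOf p μ ≤ energyOf p μ₀)
    (heq : ∀ μ ∈ probOn K, energyOf p μ = energyOf p μ₀ → μ = μ₀) :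
    energy p K = energyOf p μ₀ ∧ ∃! μ, IsEquilibrium p K μ := by
  have hE : energy p K = energyOf p μ₀ := by
    rw [energy, if_pos hp]
    exact le_antisymm (iSup₂_le hle) (le_iSup₂ (f := fun μ _ ↦ energyOf p μ) μ₀ hμ₀)
  exact ⟨hE, μ₀, ⟨hμ₀, hE.symm⟩, fun μ hμ ↦ heq μ hμ.1 (hμ.2.trans hE)⟩

theorem cap_eq_rpow_of_energy_eq_ofReal (hp : p < 0) {V : ℝ} (hV : 0 ≤ V)
    (h : energy p K = ENNReal.ofReal V) : cap p K = V ^ (-1 / p) := by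
  rw [cap, if_neg hp.ne, h, ENNReal.toReal_ofReal hV]

end Abstract

section FiniteSupport

variable {E : Type*} [MeasurableSpace E] [MeasurableSingletonClass E] {μ ν : Measure E}
  {S : Finset E}

theorem ext_of_compl_eq_zero (hμ : μ (↑S)ᶜ = 0) (hν : ν (↑S)ᶜ = 0)
    (h : ∀ i ∈ S, μ {i} = ν {i}) : μ = ν := by
  classical
  have hsum : ∀ ρ : Measure E, ρ (↑S)ᶜ = 0 → ∀ A, ρ A = ∑ i ∈ S with i ∈ A, ρ {i} := by
    intro ρ hρ A
    rw [← measure_inter_conull (s := A) hρ, sum_measure_singleton, Finset.coe_filter]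
    congr 1
    ext i
    simp [and_comm]
  ext A
  rw [hsum μ hμ, hsum ν hν]
  exact Finset.sum_congr rfl fun i hi ↦ h i (Finset.mem_filter.1 hi).1

theorem energyOf_eq_sum_of_compl_eq_zero [PseudoMetricSpace E] [SFinite μ]
    (hμ : μ (↑S)ᶜ = 0) (p : ℝ) :
    energyOf p μ = ∑ i ∈ S, ∑ j ∈ S, ENNReal.ofReal (dist i j) ^ (-p) * (μ {i} * μ {j}) := by
  have hSS : ∀ᵐ z ∂(μ.prod μ), z ∈ ((S ×ˢ S : Finset (E × E)) : Set (E × E)) := by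
    rw [ae_iff, Finset.coe_product]
    exact Measure.measure_prod_compl_eq_zero hμ hμ
  rw [energyOf, ← Measure.restrict_eq_self_of_ae_mem hSS, lintegral_finset, Finset.sum_product]
  simp only [← Set.singleton_prod_singleton, Measure.prod_prod]

end FiniteSupport

section DiscreteEnergy

variable {E : Type*} [PseudoMetricSpace E] {ι : Type*} [Fintype ι] {P : ι → E} {p : ℝ}

noncomputable def discreteEnergy (P : ι → E) (p : ℝ) (w : ι → ℝ) : ℝ :=
  ∑ i, ∑ j, dist (P i) (P j) ^ (-p) * (w i * w j)

theorem discreteEnergy_nonneg {w : ι → ℝ} (hw : ∀ i, 0 ≤ w i) : 0 ≤ discreteEnergy P p w :=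
  Finset.sum_nonneg fun i _ ↦ Finset.sum_nonneg fun j _ ↦
    mul_nonneg (by positivity) (mul_nonneg (hw i) (hw j))

end DiscreteEnergy

section Indexed

variable {E : Type*} [MeasurableSpace E] [MeasurableSingletonClass E]
  {ι : Type*} [Fintype ι] {P : ι → E}

theorem measureReal_singleton_mem_stdSimplex (hP : Injective P) {μ : Measure E}
    (hμ : μ ∈ probOn (range P)) : (fun i ↦ μ.real {P i}) ∈ stdSimplex ℝ ι := by
  classical
  obtain ⟨_, hμ⟩ := hμ
  refine ⟨fun i ↦ measureReal_nonneg, ?_⟩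
  rw [← Finset.sum_image (f := fun e ↦ μ.real {e}) hP.injOn, sum_measureReal_singleton,
    Fintype.coe_image_univ, measureReal_def, ← univ_inter (range P), measure_inter_conull hμ]
  simp

theorem exists_mem_probOn_measureReal_eq (hP : Injective P) {w : ι → ℝ}
    (hw : w ∈ stdSimplex ℝ ι) : ∃ μ ∈ probOn (range P), ∀ i, μ.real {P i} = w i := by
  refine ⟨∑ i, ENNReal.ofReal (w i) • Measure.dirac (P i), ⟨⟨?_⟩, ?_⟩, fun i ↦ ?_⟩
  · simp [← ENNReal.ofReal_sum_of_nonneg fun i _ ↦ hw.1 i, hw.2]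
  · simp
  · simp only [measureReal_def, Measure.coe_finsetSum, Finset.sum_apply, Measure.smul_apply,
      Measure.dirac_apply, smul_eq_mul]
    rw [Finset.sum_eq_single i (fun j _ hj ↦ by simp [hP.ne hj]) (by simp)]
    simp [hw.1 i]

theorem eq_of_measureReal_singleton_eq {μ ν : Measure E}
    (hμ : μ ∈ probOn (range P)) (hν : ν ∈ probOn (range P))
    (h : ∀ i, μ.real {P i} = ν.real {P i}) : μ = ν := by
  classical
  have := hμ.1
  have := hν.1
  rw [← Fintype.coe_image_univ] at hμ hν
  refine ext_of_compl_eq_zero hμ.2 hν.2 fun e he ↦ ?_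
  obtain ⟨i, -, rfl⟩ := Finset.mem_image.1 he
  exact (measureReal_eq_measureReal_iff).1 (h i)

variable [PseudoMetricSpace E] {p : ℝ}

theorem energyOf_eq_ofReal_discreteEnergy (hP : Injective P) (hp : p ≤ 0) {μ : Measure E}
    [IsFiniteMeasure μ] (hμ : μ (range P)ᶜ = 0) :
    energyOf p μ = ENNReal.ofReal (discreteEnergy P p fun i ↦ μ.real {P i}) := by
  classical
  rw [← Fintype.coe_image_univ] at hμ
  rw [energyOf_eq_sum_of_compl_eq_zero hμ, Finset.sum_image hP.injOn, discreteEnergy,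
    ENNReal.ofReal_sum_of_nonneg fun i _ ↦ Finset.sum_nonneg fun j _ ↦ by positivity]
  refine Finset.sum_congr rfl fun i _ ↦ ?_
  rw [Finset.sum_image hP.injOn,
    ENNReal.ofReal_sum_of_nonneg fun j _ ↦ by positivity]
  refine Finset.sum_congr rfl fun j _ ↦ ?_
  rw [ENNReal.ofReal_mul (by positivity), ENNReal.ofReal_mul measureReal_nonneg,
    ofReal_measureReal, ofReal_measureReal,
    ENNReal.ofReal_rpow_of_nonneg dist_nonneg (neg_nonneg.2 hp)]

theorem energy_range_eq_and_existsUnique_isEquilibrium (hP : Injective P) (hp : p < 0)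
    {w₀ : ι → ℝ} (hw₀ : IsUniqueMaxOn (discreteEnergy P p) (stdSimplex ℝ ι) w₀) :
    energy p (range P) = ENNReal.ofReal (discreteEnergy P p w₀) ∧
      ∃! μ, IsEquilibrium p (range P) μ := by
  obtain ⟨μ₀, hμ₀, hμ₀w⟩ := exists_mem_probOn_measureReal_eq hP hw₀.1
  have hE : ∀ μ ∈ probOn (range P),
      energyOf p μ = ENNReal.ofReal (discreteEnergy P p fun i ↦ μ.real {P i}) :=
    fun μ hμ ↦ have := hμ.1; energyOf_eq_ofReal_discreteEnergy hP hp.le hμ.2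
  have hE₀ : energyOf p μ₀ = ENNReal.ofReal (discreteEnergy P p w₀) := by
    rw [hE μ₀ hμ₀, funext hμ₀w]
  rw [← hE₀]
  refine energy_eq_and_existsUnique_isEquilibrium hp hμ₀ (fun μ hμ ↦ ?_) fun μ hμ heq ↦ ?_
  · rw [hE μ hμ, hE₀]
    exact ENNReal.ofReal_le_ofReal (hw₀.le (measureReal_singleton_mem_stdSimplex hP hμ))
  · have hw : (fun i ↦ μ.real {P i}) = w₀ := by
      by_contra hne
      have hlt := hw₀.2 _ (measureReal_singleton_mem_stdSimplex hP hμ) hne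
      rw [hE μ hμ, hE₀] at heq
      exact ((ENNReal.ofReal_lt_ofReal_iff_of_nonneg
        (discreteEnergy_nonneg fun i ↦ measureReal_nonneg)).2 hlt).ne heq
    exact eq_of_measureReal_singleton_eq hμ hμ₀ fun i ↦ by rw [hμ₀w, ← hw]

end Indexed

def tripleForm (α β γ : ℝ) (w : Fin 3 → ℝ) : ℝ :=
  2 * (α * w 0 * w 1 + β * w 1 * w 2 + γ * w 2 * w 0)

theorem discreteEnergy_triple {E : Type*} [PseudoMetricSpace E] {p : ℝ} (hp : p < 0)
    (x y z : E) :
    discreteEnergy ![x, y, z] p =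
      tripleForm (dist x y ^ (-p)) (dist y z ^ (-p)) (dist z x ^ (-p)) := by
  funext w
  simp only [discreteEnergy, tripleForm, Fin.sum_univ_three, Matrix.cons_val, dist_self,
    Real.zero_rpow (neg_ne_zero.2 hp.ne), dist_comm y x, dist_comm z y, dist_comm x z]
  ring

theorem energy_triple_eq_and_existsUnique_isEquilibrium {E : Type*} [MeasurableSpace E]
    [MeasurableSingletonClass E] [PseudoMetricSpace E] {p : ℝ} (hp : p < 0) {x y z : E}
    (hxy : x ≠ y) (hyz : y ≠ z) (hxz : x ≠ z) {w₀ : Fin 3 → ℝ}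
    (hw₀ : IsUniqueMaxOn (tripleForm (dist x y ^ (-p)) (dist y z ^ (-p)) (dist z x ^ (-p)))
      (stdSimplex ℝ (Fin 3)) w₀) :
    energy p {x, y, z} =
        ENNReal.ofReal (tripleForm (dist x y ^ (-p)) (dist y z ^ (-p)) (dist z x ^ (-p)) w₀) ∧
      ∃! μ, IsEquilibrium p {x, y, z} μ := by
  have hP : Injective ![x, y, z] := by
    intro i j h
    fin_cases i <;> fin_cases j <;> simp_all [eq_comm]
  have hrange : range ![x, y, z] = {x, y, z} := by
    simp only [Matrix.range_cons, Matrix.range_empty, union_empty, singleton_union]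
  rw [← hrange, ← discreteEnergy_triple hp]
  exact energy_range_eq_and_existsUnique_isEquilibrium hP hp (discreteEnergy_triple hp x y z ▸ hw₀)

theorem mem_stdSimplex_fin_three {w : Fin 3 → ℝ} :
    w ∈ stdSimplex ℝ (Fin 3) ↔ 0 ≤ w 0 ∧ 0 ≤ w 1 ∧ 0 ≤ w 2 ∧ w 0 + w 1 + w 2 = 1 := by
  simp [stdSimplex, Fin.forall_fin_succ, Fin.sum_univ_three, and_assoc]

theorem tripleForm_half_half_zero (α β γ : ℝ) : tripleForm α β γ ![1 / 2, 1 / 2, 0] = α / 2 := by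
  simp only [tripleForm, Matrix.cons_val]
  ring

theorem isUniqueMaxOn_tripleForm_of_add_le {α β γ : ℝ} (hβ : 0 < β) (hγ : 0 < γ)
    (h : β + γ ≤ α) :
    IsUniqueMaxOn (tripleForm α β γ) (stdSimplex ℝ (Fin 3)) ![1 / 2, 1 / 2, 0] := by
  refine ⟨mem_stdSimplex_fin_three.2 (by norm_num [Matrix.cons_val_two]),
    fun w hw hne ↦ lt_of_not_ge fun hge ↦ hne ?_⟩
  obtain ⟨hu, hv, hs, hsum⟩ := mem_stdSimplex_fin_three.1 hw
  have hsos : α / 2 - tripleForm α β γ w = β / 2 * (w 0 - w 1 + w 2) ^ 2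
      + γ / 2 * (w 0 - w 1 - w 2) ^ 2 + (α - β - γ) / 2 * ((w 0 - w 1) ^ 2 + w 2 ^ 2)
      + (α - β - γ) * (w 2 * (w 0 + w 1)) := by
    rw [tripleForm, show w 2 = 1 - w 0 - w 1 by linarith]
    ring
  rw [tripleForm_half_half_zero] at hge
  have hαβγ : 0 ≤ α - β - γ := by linarith
  have hrest : 0 ≤ (α - β - γ) / 2 * ((w 0 - w 1) ^ 2 + w 2 ^ 2) := by positivity
  have hrest' : 0 ≤ (α - β - γ) * (w 2 * (w 0 + w 1)) := by positivity
  have hsq := (add_eq_zero_iff_of_nonneg (by positivity) (by positivity)).1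
    (le_antisymm (by linarith) (by positivity) :
      β / 2 * (w 0 - w 1 + w 2) ^ 2 + γ / 2 * (w 0 - w 1 - w 2) ^ 2 = 0)
  simp only [mul_eq_zero, (half_pos hβ).ne', (half_pos hγ).ne', false_or,
    pow_eq_zero_iff two_ne_zero] at hsq
  ext i
  fin_cases i <;> simp only [Fin.zero_eta, Fin.mk_one, Fin.reduceFinMk, Matrix.cons_val] <;>
    linarith [hsq.1, hsq.2]

theorem sq_add_sub_lt_four_mul_mul {α β γ : ℝ} (hβ : 0 < β) (hγ : 0 < γ)
    (hβα : β ≤ α) (hγα : γ ≤ α) (h : α < β + γ) : (β + γ - α) ^ 2 < 4 * β * γ := by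
  nlinarith [mul_pos hβ hγ]

theorem tripleForm_lagrange {α β γ D : ℝ} (hD : D = 4 * β * γ - (β + γ - α) ^ 2) (hD0 : D ≠ 0) :
    tripleForm α β γ ![β * (α + γ - β) / D, γ * (α + β - γ) / D, α * (β + γ - α) / D] =
      2 * α * β * γ / D := by
  simp only [tripleForm, Matrix.cons_val]
  field_simp
  rw [hD]
  ring

theorem isUniqueMaxOn_tripleForm_of_lt_add {α β γ D : ℝ} (hβ : 0 < β) (hγ : 0 < γ)
    (hβα : β ≤ α) (hγα : γ ≤ α) (h : α < β + γ) (hD : D = 4 * β * γ - (β + γ - α) ^ 2) :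
    IsUniqueMaxOn (tripleForm α β γ) (stdSimplex ℝ (Fin 3))
      ![β * (α + γ - β) / D, γ * (α + β - γ) / D, α * (β + γ - α) / D] := by
  have hD0 : 0 < D := by linarith [sq_add_sub_lt_four_mul_mul hβ hγ hβα hγα h]
  have hsum₀ : β * (α + γ - β) / D + γ * (α + β - γ) / D + α * (β + γ - α) / D = 1 := by
    field_simp
    rw [hD]
    ring
  refine ⟨mem_stdSimplex_fin_three.2 ⟨?_, ?_, ?_, by simpa using hsum₀⟩,
    fun w hw hne ↦ lt_of_not_ge fun hge ↦ hne ?_⟩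
  · simpa using div_nonneg (mul_nonneg hβ.le (by linarith)) hD0.le
  · simpa using div_nonneg (mul_nonneg hγ.le (by linarith)) hD0.le
  · simpa using div_nonneg (mul_nonneg (by linarith) (by linarith)) hD0.le
  obtain ⟨-, -, -, hsum⟩ := mem_stdSimplex_fin_three.1 hw
  have hw2 : w 2 = 1 - w 0 - w 1 := by linarith
  -- `e₁ = e₂ = 0` are the Lagrange conditions; `hsos` writes the energy gap as a positive
  -- definite quadratic form in `(e₁, e₂)`.
  set e₁ := D * w 0 - β * (α + γ - β)
  set e₂ := D * w 1 - γ * (α + β - γ)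
  have hsos : 2 * β * D * (2 * α * β * γ - tripleForm α β γ w * D)
      = (2 * β * e₂ + (β + γ - α) * e₁) ^ 2 + D * e₁ ^ 2 := by
    simp only [e₁, e₂, tripleForm, hw2, hD]
    ring
  have hle : 2 * β * D * (2 * α * β * γ - tripleForm α β γ w * D) ≤ 0 := by
    rw [tripleForm_lagrange hD hD0.ne', div_le_iff₀ hD0] at hge
    exact mul_nonpos_of_nonneg_of_nonpos (by positivity) (by linarith)
  have hsq := (add_eq_zero_iff_of_nonneg (by positivity) (by positivity)).1
    (le_antisymm (hsos ▸ hle) (by positivity) :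
      (2 * β * e₂ + (β + γ - α) * e₁) ^ 2 + D * e₁ ^ 2 = 0)
  simp only [mul_eq_zero, hD0.ne', false_or, pow_eq_zero_iff two_ne_zero] at hsq
  obtain ⟨h₁₂, h₁⟩ := hsq
  have h₂ : e₂ = 0 := by
    rw [h₁, mul_zero, add_zero] at h₁₂
    simpa [hβ.ne'] using h₁₂
  ext i
  fin_cases i <;> simp only [Fin.zero_eta, Fin.mk_one, Fin.reduceFinMk, Matrix.cons_val] <;>
    rw [eq_div_iff hD0.ne']
  · linear_combination h₁
  · linear_combination h₂
  · rw [hw2]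
    linear_combination -h₁ - h₂ + hD

theorem rpow_div_two_rpow_inv {c t : ℝ} (hc : 0 ≤ c) (ht : t ≠ 0) :
    (c ^ t / 2) ^ t⁻¹ = (2 : ℝ) ^ (-1 / t) * c := by
  rw [Real.div_rpow (by positivity) zero_le_two, Real.rpow_rpow_inv hc ht, neg_div, one_div,
    Real.rpow_neg zero_le_two]
  ring

theorem mul_rpow_div_rpow_inv {a b c t D : ℝ} (ha : 0 ≤ a) (hb : 0 ≤ b) (hc : 0 ≤ c) (ht : t ≠ 0)
    (hD : 0 ≤ D) :
    (2 * c ^ t * a ^ t * b ^ t / D) ^ t⁻¹ = (2 : ℝ) ^ (1 / t) * a * b * c / D ^ (1 / t) := by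
  rw [one_div, Real.div_rpow (by positivity) hD, Real.mul_rpow (by positivity) (by positivity),
    Real.mul_rpow (by positivity) (by positivity), Real.mul_rpow zero_le_two (by positivity),
    Real.rpow_rpow_inv ha ht, Real.rpow_rpow_inv hb ht, Real.rpow_rpow_inv hc ht]
  ring

end Riesz

open Riesz

/-- Capacity of a three-point set in the plane, for `p < 0`, `t = -p`: with distances
`a = |y-z|`, `b = |z-x|`, `c = |x-y|` and `0 < a, b ≤ c`, the `p`-capacity is
`2^(-1/t) c` if `a^t + b^t ≤ c^t` and `2^(1/t) a b c/(4(ab)^t - (a^t+b^t-c^t)^2)^(1/t)`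
otherwise; moreover the `p`-equilibrium measure on `T` is unique. -/
theorem statement6 (p t a b c : ℝ) (hp : p < 0) (ht : t = -p)
    (x y z : EuclideanSpace ℝ (Fin 2)) (T : Set (EuclideanSpace ℝ (Fin 2)))
    (hT : T = {x, y, z})
    (hc : c = dist x y) (ha : a = dist y z) (hb : b = dist z x)
    (ha0 : 0 < a) (hb0 : 0 < b) (hac : a ≤ c) (hbc : b ≤ c) :
    (a ^ t + b ^ t ≤ c ^ t → Riesz.cap p T = (2 : ℝ) ^ (-1 / t) * c) ∧
    (c ^ t < a ^ t + b ^ t →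
      Riesz.cap p T = (2 : ℝ) ^ (1 / t) * a * b * c /
        (4 * (a * b) ^ t - (a ^ t + b ^ t - c ^ t) ^ 2) ^ (1 / t)) ∧
    (∃! μ : Measure (EuclideanSpace ℝ (Fin 2)), Riesz.IsEquilibrium p T μ) := by
  have hc0 : 0 < c := ha0.trans_le hac
  have ht0 : 0 < t := by linarith
  have hexp : -1 / p = t⁻¹ := by rw [ht, inv_neg, neg_div, one_div]
  have hreduce : ∀ w₀,
      IsUniqueMaxOn (tripleForm (c ^ t) (a ^ t) (b ^ t)) (stdSimplex ℝ (Fin 3)) w₀ →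
      energy p T = ENNReal.ofReal (tripleForm (c ^ t) (a ^ t) (b ^ t) w₀) ∧
        ∃! μ, IsEquilibrium p T μ := by
    subst ht hT hc ha hb
    exact fun w₀ ↦ energy_triple_eq_and_existsUnique_isEquilibrium hp (dist_pos.1 hc0)
      (dist_pos.1 ha0) (dist_pos.1 hb0).symm
  have hβ : 0 < a ^ t := by positivity
  have hγ : 0 < b ^ t := by positivity
  have hβα : a ^ t ≤ c ^ t := Real.rpow_le_rpow ha0.le hac ht0.le
  have hγα : b ^ t ≤ c ^ t := Real.rpow_le_rpow hb0.le hbc ht0.le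
  rcases le_or_gt (a ^ t + b ^ t) (c ^ t) with h | h
  · obtain ⟨hE, hμ⟩ := hreduce _ (isUniqueMaxOn_tripleForm_of_add_le hβ hγ h)
    rw [tripleForm_half_half_zero] at hE
    refine ⟨fun _ ↦ ?_, fun h' ↦ absurd h' h.not_gt, hμ⟩
    rw [cap_eq_rpow_of_energy_eq_ofReal hp (by positivity) hE, hexp,
      rpow_div_two_rpow_inv hc0.le ht0.ne']
  · have hD : 4 * (a * b) ^ t - (a ^ t + b ^ t - c ^ t) ^ 2 =
        4 * a ^ t * b ^ t - (a ^ t + b ^ t - c ^ t) ^ 2 := by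
      rw [Real.mul_rpow ha0.le hb0.le, mul_assoc]
    have hD0 : 0 < 4 * (a * b) ^ t - (a ^ t + b ^ t - c ^ t) ^ 2 := by
      linarith [sq_add_sub_lt_four_mul_mul hβ hγ hβα hγα h]
    obtain ⟨hE, hμ⟩ := hreduce _ (isUniqueMaxOn_tripleForm_of_lt_add hβ hγ hβα hγα h hD)
    rw [tripleForm_lagrange hD hD0.ne'] at hE
    refine ⟨fun h' ↦ absurd h h'.not_gt, fun _ ↦ ?_, hμ⟩
    rw [cap_eq_rpow_of_energy_eq_ofReal hp (by positivity) hE, hexp,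
      mul_rpow_div_rpow_inv ha0.le hb0.le hc0.le ht0.ne' hD0.le]
end

section
/- Let p < 0 and let S ⊂ ℝⁿ be a regular k-point set (k ≥ 2 points with all pairwise distances equal to d > 0). Then cap_p(S) = ((k−1)/k)^{−1/p} · d, and the unique p-equilibrium measure on S is the uniform probability measure assigning mass 1/k to each point of S. -/
open MeasureTheory Metric Set ENNReal Filter

/-!
A probability measure on `S` is determined by its weights `w x = μ {x}`, and since the kernel
vanishes on the diagonal its energy is `d^(-p) ∑_{x ≠ y} w x w y = d^(-p) (1 - ∑ w x ^ 2)`.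
With `∑ w x = 1` one has `∑ w x ^ 2 = 1/k + ∑ (w x - 1/k) ^ 2`, so the energy is
`d^(-p) ((k-1)/k - ∑ (w x - 1/k) ^ 2)`, maximal exactly at the uniform weights.
-/

lemma Finset.sum_product_ite_eq_mul_sq_sub {ι R : Type*} [CommRing R] [DecidableEq ι]
    (S : Finset ι) (w : ι → R) (D : R) :
    ∑ z ∈ S ×ˢ S, (if z.1 = z.2 then 0 else D) * (w z.1 * w z.2) =
      D * ((∑ x ∈ S, w x) ^ 2 - ∑ x ∈ S, w x ^ 2) := by
  have hsq : (∑ x ∈ S, w x) ^ 2 = ∑ z ∈ S ×ˢ S, w z.1 * w z.2 := by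
    rw [sq, Finset.sum_mul_sum, Finset.sum_product]
  have hdiag : ∑ x ∈ S, w x ^ 2 = ∑ z ∈ S ×ˢ S, if z.1 = z.2 then w z.1 * w z.2 else 0 := by
    rw [Finset.sum_product]
    exact Finset.sum_congr rfl fun x hx => by simp [hx, sq]
  rw [hsq, hdiag, ← Finset.sum_sub_distrib, Finset.mul_sum]
  refine Finset.sum_congr rfl fun z _ => ?_
  split_ifs <;> ring

lemma Finset.sum_sq_eq_inv_card_add_sum_sq_sub {ι K : Type*} [Field K] [CharZero K]
    (S : Finset ι) (w : ι → K) (hw : ∑ x ∈ S, w x = 1) :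
    ∑ x ∈ S, w x ^ 2 = (S.card : K)⁻¹ + ∑ x ∈ S, (w x - (S.card : K)⁻¹) ^ 2 := by
  have hS : (S.card : K) ≠ 0 := by
    rintro h
    simp_all [Finset.card_eq_zero.1 (Nat.cast_eq_zero.1 h)]
  simp only [sub_sq, Finset.sum_add_distrib, Finset.sum_sub_distrib, ← Finset.sum_mul,
    ← Finset.mul_sum, hw, Finset.sum_const, nsmul_eq_mul]
  field_simp
  ring

namespace Riesz

variable {E : Type*} [MeasurableSpace E] [MeasurableSingletonClass E]

lemma ext_of_measure_compl_finset_eq_zero {S : Finset E} {μ ν : Measure E}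
    (hμ : μ (↑S)ᶜ = 0) (hν : ν (↑S)ᶜ = 0) (h : ∀ x ∈ S, μ {x} = ν {x}) : μ = ν := by
  classical
  ext A -
  have sum_filter : ∀ ρ : Measure E, ρ (↑S)ᶜ = 0 → ρ A = ∑ x ∈ S with x ∈ A, ρ {x} := by
    intro ρ hρ
    rw [sum_measure_singleton, Finset.coe_filter, ← measure_inter_conull hρ]
    congr 1
    ext x
    simp [and_comm]
  rw [sum_filter μ hμ, sum_filter ν hν]
  exact Finset.sum_congr rfl fun x hx => h x (Finset.mem_filter.1 hx).1

lemma sum_measureReal_singleton_eq_one {S : Finset E} {μ : Measure E} (hμ : μ ∈ probOn S) :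
    ∑ x ∈ S, μ.real {x} = 1 := by
  have := hμ.1
  rw [sum_measureReal_singleton, measureReal_def,
    (prob_compl_eq_zero_iff S.finite_toSet.measurableSet).1 hμ.2, ENNReal.toReal_one]

noncomputable def uniformMeasure (S : Finset E) : Measure E :=
  (S.card : ℝ≥0∞)⁻¹ • ∑ x ∈ S, Measure.dirac x

lemma uniformMeasure_apply (S : Finset E) (A : Set E) [DecidablePred (· ∈ A)] :
    uniformMeasure S A = (S.card : ℝ≥0∞)⁻¹ * (S.filter (· ∈ A)).card := by
  simp [uniformMeasure, Measure.finsetSum_apply, Measure.dirac_apply, Set.indicator_apply]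

lemma uniformMeasure_singleton {S : Finset E} {x : E} (hx : x ∈ S) :
    uniformMeasure S {x} = (S.card : ℝ≥0∞)⁻¹ := by
  classical
  rw [uniformMeasure_apply, show S.filter (· ∈ ({x} : Set E)) = {x} by ext; simp_all]
  simp

lemma uniformMeasure_mem_probOn {S : Finset E} (hS : S.Nonempty) :
    uniformMeasure S ∈ probOn S := by
  classical
  refine ⟨⟨?_⟩, ?_⟩
  · rw [uniformMeasure_apply]
    simp [ENNReal.inv_mul_cancel, hS.ne_empty]
  · rw [uniformMeasure_apply]
    simp

section Energy

variable [PseudoMetricSpace E]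

lemma energyOf_eq_ofReal_sum {p : ℝ} (hp : p ≤ 0) {S : Finset E} {μ : Measure E}
    [IsFiniteMeasure μ] (hμ : μ (↑S)ᶜ = 0) :
    energyOf p μ = ENNReal.ofReal
      (∑ z ∈ S ×ˢ S, dist z.1 z.2 ^ (-p) * (μ.real {z.1} * μ.real {z.2})) := by
  have hrestrict : μ.restrict S = μ := Measure.restrict_eq_self_of_ae_mem (ae_iff.2 hμ)
  rw [energyOf, ← hrestrict, Measure.prod_restrict, ← Finset.coe_product, lintegral_finset,
    hrestrict, ENNReal.ofReal_sum_of_nonneg fun z _ => by positivity]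
  refine Finset.sum_congr rfl fun z _ => ?_
  rw [ENNReal.ofReal_mul (by positivity), ENNReal.ofReal_mul (by positivity),
    ofReal_measureReal, ofReal_measureReal, ← Measure.prod_prod, Set.singleton_prod_singleton,
    ENNReal.ofReal_rpow_of_nonneg dist_nonneg (by linarith)]

theorem energyOf_eq_of_pairwise_dist_eq {p d : ℝ} (hp : p < 0) {S : Finset E}
    (hS : (S : Set E).Pairwise fun x y => dist x y = d) {μ : Measure E} (hμ : μ ∈ probOn S) :
    energyOf p μ = ENNReal.ofReal (d ^ (-p) *
      (((S.card : ℝ) - 1) / S.card - ∑ x ∈ S, (μ.real {x} - (S.card : ℝ)⁻¹) ^ 2)) := by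
  classical
  have := hμ.1
  have hw := sum_measureReal_singleton_eq_one hμ
  have hk : (S.card : ℝ) ≠ 0 := by
    rintro h
    simp_all [Finset.card_eq_zero.1 (Nat.cast_eq_zero.1 h)]
  have hkernel : ∀ z ∈ S ×ˢ S, dist z.1 z.2 ^ (-p) = if z.1 = z.2 then 0 else d ^ (-p) := by
    rintro ⟨x, y⟩ hz
    rw [Finset.mem_product] at hz
    split_ifs with h
    · obtain rfl : x = y := h
      simp [Real.zero_rpow (neg_ne_zero.2 hp.ne)]
    · rw [hS hz.1 hz.2 h]
  rw [energyOf_eq_ofReal_sum hp.le hμ.2, Finset.sum_congr rfl fun z hz => by rw [hkernel z hz],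
    Finset.sum_product_ite_eq_mul_sq_sub S fun x => μ.real {x}, hw,
    Finset.sum_sq_eq_inv_card_add_sum_sq_sub S _ hw, sub_div, div_self hk]
  ring_nf

theorem energyOf_uniformMeasure_of_pairwise_dist_eq {p d : ℝ} (hp : p < 0) {S : Finset E}
    (hne : S.Nonempty) (hS : (S : Set E).Pairwise fun x y => dist x y = d) :
    energyOf p (uniformMeasure S) = ENNReal.ofReal (d ^ (-p) * (((S.card : ℝ) - 1) / S.card)) := by
  rw [energyOf_eq_of_pairwise_dist_eq hp hS (uniformMeasure_mem_probOn hne),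
    Finset.sum_eq_zero fun x hx => ?_, sub_zero]
  simp [measureReal_def, uniformMeasure_singleton hx]

theorem energy_eq_of_pairwise_dist_eq {p d : ℝ} (hp : p < 0) (hd : 0 ≤ d) {S : Finset E}
    (hne : S.Nonempty) (hS : (S : Set E).Pairwise fun x y => dist x y = d) :
    energy p (S : Set E) = ENNReal.ofReal (d ^ (-p) * (((S.card : ℝ) - 1) / S.card)) := by
  rw [energy, if_pos hp]
  refine le_antisymm (iSup₂_le fun μ hμ => ?_) ?_
  · rw [energyOf_eq_of_pairwise_dist_eq hp hS hμ]
    gcongr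
    exact sub_le_self _ (Finset.sum_nonneg fun x _ => sq_nonneg _)
  · exact le_iSup₂_of_le (uniformMeasure S) (uniformMeasure_mem_probOn hne)
      (energyOf_uniformMeasure_of_pairwise_dist_eq hp hne hS).ge

theorem isEquilibrium_iff_eq_uniformMeasure {p d : ℝ} (hp : p < 0) (hd : 0 < d) {S : Finset E}
    (hk : 2 ≤ S.card) (hS : (S : Set E).Pairwise fun x y => dist x y = d) {μ : Measure E} :
    IsEquilibrium p (S : Set E) μ ↔ μ = uniformMeasure S := by
  have hne : S.Nonempty := Finset.card_pos.1 (by omega)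
  refine ⟨fun ⟨hμ, hE⟩ => ?_, fun h => h ▸ ⟨uniformMeasure_mem_probOn hne, ?_⟩⟩
  · have := hμ.1
    rw [energyOf_eq_of_pairwise_dist_eq hp hS hμ, energy_eq_of_pairwise_dist_eq hp hd.le hne hS]
      at hE
    set V := ∑ x ∈ S, (μ.real {x} - (S.card : ℝ)⁻¹) ^ 2
    have hc : 0 < ((S.card : ℝ) - 1) / S.card := by
      have : (2 : ℝ) ≤ S.card := by exact_mod_cast hk
      apply div_pos <;> linarith
    have hD : 0 < d ^ (-p) := Real.rpow_pos_of_pos hd _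
    have hlhs := ENNReal.ofReal_pos.1 (hE ▸ ENNReal.ofReal_pos.2 (mul_pos hD hc))
    have hV : V = 0 := by
      have := mul_left_cancel₀ hD.ne' ((ENNReal.ofReal_eq_ofReal_iff hlhs.le
        (mul_pos hD hc).le).1 hE)
      linarith
    refine ext_of_measure_compl_finset_eq_zero hμ.2 (uniformMeasure_mem_probOn hne).2
      fun x hx => ?_
    have hx0 := (Finset.sum_eq_zero_iff_of_nonneg fun y _ => sq_nonneg _).1 hV x hx
    rw [uniformMeasure_singleton hx, ← ofReal_measureReal (μ := μ),
      sub_eq_zero.1 (pow_eq_zero_iff two_ne_zero |>.1 hx0),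
      ENNReal.ofReal_inv_of_pos (by positivity), ENNReal.ofReal_natCast]
  · rw [energyOf_uniformMeasure_of_pairwise_dist_eq hp hne hS,
      energy_eq_of_pairwise_dist_eq hp hd.le hne hS]

theorem cap_eq_of_pairwise_dist_eq {p d : ℝ} (hp : p < 0) (hd : 0 ≤ d) {S : Finset E}
    (hne : S.Nonempty) (hS : (S : Set E).Pairwise fun x y => dist x y = d) :
    cap p (S : Set E) = (((S.card : ℝ) - 1) / S.card) ^ (-1 / p) * d := by
  have hc : 0 ≤ ((S.card : ℝ) - 1) / S.card := by
    have : (1 : ℝ) ≤ S.card := by exact_mod_cast hne.card_pos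
    apply div_nonneg <;> linarith
  rw [cap, if_neg hp.ne, energy_eq_of_pairwise_dist_eq hp hd hne hS,
    ENNReal.toReal_ofReal (by positivity), Real.mul_rpow (by positivity) hc,
    show -1 / p = (-p)⁻¹ by rw [inv_neg, neg_div, one_div], Real.rpow_rpow_inv hd (by linarith),
    mul_comm]

end Energy

end Riesz

/-- Capacity and equilibrium measure of a regular `k`-point set: for `p < 0` and a set
`S` of `k ≥ 2` points in `ℝⁿ` with all pairwise distances equal to `d > 0`,
`cap_p(S) = ((k-1)/k)^(-1/p)·d`, and the `p`-equilibrium measures of `S` are exactly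
the uniform probability measure giving mass `1/k` to each point. -/
theorem statement17 (n : ℕ) (p d : ℝ) (hp : p < 0) (hd : 0 < d)
    (S : Finset (EuclideanSpace ℝ (Fin n))) (hk : 2 ≤ S.card)
    (hdist : ∀ x ∈ S, ∀ y ∈ S, x ≠ y → dist x y = d) :
    Riesz.cap p (↑S : Set (EuclideanSpace ℝ (Fin n))) =
      (((S.card : ℝ) - 1) / (S.card : ℝ)) ^ (-1 / p) * d ∧
    ∀ μ : Measure (EuclideanSpace ℝ (Fin n)),
      Riesz.IsEquilibrium p (↑S : Set (EuclideanSpace ℝ (Fin n))) μ ↔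
        μ = ((S.card : ℝ≥0∞))⁻¹ • ∑ x ∈ S, Measure.dirac x :=
  ⟨Riesz.cap_eq_of_pairwise_dist_eq hp hd.le (Finset.card_pos.1 (by omega)) hdist,
    fun _ => Riesz.isEquilibrium_iff_eq_uniformMeasure hp hd hk hdist⟩
end

section
/- There exists a unique q ∈ (−1, 0) satisfying 2√π · Γ(1 − q/2) = 3 · Γ((1 − q)/2), where Γ denotes the Gamma function. Moreover this q is the only solution of the equation among all q < 0, since the difference quotient (log Γ((1−q)/2 + 1/2) − log Γ((1−q)/2)) / (1/2) is strictly increasing as a function of −q > 0 by strict convexity of log Γ. -/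
open MeasureTheory Metric Set ENNReal Filter

/-!
With `x = (1 - q) / 2` the equation reads `Γ (x + 1/2) / Γ x = 3 / (2√π)`. The logarithm of the
left-hand side is an increment of the strictly convex function `log ∘ Γ` over the step `1/2`,
hence strictly increasing in `x > 0`: this gives uniqueness among all `q < 0`. At `x = 1/2` and
`x = 1` the ratio equals `1/√π` and `√π/2`, which bracket `3 / (2√π)` because `2 < 3 < π`; the
intermediate value theorem gives a solution with `x ∈ (1/2, 1)`, i.e. `q ∈ (-1, 0)`.
-/

open Real

section IncrementOfStrictConvex

variable {𝕜 : Type*} [Field 𝕜] [LinearOrder 𝕜] [IsStrictOrderedRing 𝕜]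

theorem StrictConvexOn.add_sub_lt_add_sub {s : Set 𝕜} {f : 𝕜 → 𝕜} (hf : StrictConvexOn 𝕜 s f)
    {x y h : 𝕜} (hx : x ∈ s) (hyh : y + h ∈ s) (hxy : x < y) (hh : 0 < h) :
    f (x + h) - f x < f (y + h) - f y := by
  have hs := hf.1.ordConnected
  have hxh : x + h ∈ s := hs.out hx hyh ⟨by linarith, by linarith⟩
  have hy : y ∈ s := hs.out hx hyh ⟨hxy.le, by linarith⟩
  suffices (f (x + h) - f x) / h < (f (y + h) - f y) / h from
    (div_lt_div_iff_of_pos_right hh).1 this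
  calc (f (x + h) - f x) / h = (f (x + h) - f x) / (x + h - x) := by rw [add_sub_cancel_left]
    _ < (f (y + h) - f x) / (y + h - x) :=
      hf.secant_strict_mono hx hxh hyh (by linarith) (by linarith) (by linarith)
    _ = (f x - f (y + h)) / (x - (y + h)) := by rw [← neg_div_neg_eq, neg_sub, neg_sub]
    _ < (f y - f (y + h)) / (y - (y + h)) :=
      hf.secant_strict_mono hyh hx hy (by linarith) (by linarith) hxy
    _ = (f (y + h) - f y) / h := by rw [← neg_div_neg_eq, neg_sub, neg_sub, add_sub_cancel_left]

end IncrementOfStrictConvex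

namespace Real

theorem strictConvexOn_log_Gamma : StrictConvexOn ℝ (Ioi 0) (log ∘ Gamma) := by
  have hshift : ConvexOn ℝ (Ioi 0) (log ∘ Gamma ∘ fun x => 1 + x) :=
    (convexOn_log_Gamma.translate_right 1).subset
      (fun x (hx : 0 < x) => show 0 < 1 + x by linarith) (convex_Ioi 0)
  -- `log Γ x = log Γ (1 + x) - log x`, and `-log` is strictly convex
  refine (hshift.add_strictConvexOn strictConcaveOn_log_Ioi.neg).congr fun x (hx : 0 < x) => ?_
  simp only [Function.comp_apply, Pi.add_apply, Pi.neg_apply]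
  rw [add_comm 1 x, Gamma_add_one hx.ne', log_mul hx.ne' (Gamma_pos_of_pos hx).ne']
  ring

theorem continuousOn_log_Gamma : ContinuousOn (log ∘ Gamma) (Ioi 0) := fun x (hx : 0 < x) =>
  have hx' : ∀ m : ℕ, x ≠ -m := fun m => ((neg_nonpos.2 m.cast_nonneg).trans_lt hx).ne'
  ((differentiableAt_Gamma hx').continuousAt.log (Gamma_pos_of_pos hx).ne').continuousWithinAt

theorem strictMonoOn_log_Gamma_add_sub_log_Gamma {h : ℝ} (hh : 0 < h) :
    StrictMonoOn (fun x => log (Gamma (x + h)) - log (Gamma x)) (Ioi 0) :=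
  fun _ hx _ (hy : 0 < _) hxy =>
    strictConvexOn_log_Gamma.add_sub_lt_add_sub hx (add_pos hy hh) hxy hh

theorem continuousOn_log_Gamma_add_sub_log_Gamma {h : ℝ} (hh : 0 < h) :
    ContinuousOn (fun x => log (Gamma (x + h)) - log (Gamma x)) (Ioi 0) :=
  (continuousOn_log_Gamma.comp (continuous_add_const h).continuousOn
    fun x (hx : 0 < x) => show 0 < x + h by linarith).sub continuousOn_log_Gamma

theorem two_sqrt_pi_mul_Gamma_add_half_eq_iff {x : ℝ} (hx : 0 < x) :
    2 * √π * Gamma (x + 1 / 2) = 3 * Gamma x ↔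
      log (Gamma (x + 1 / 2)) - log (Gamma x) = log 3 - log (2 * √π) := by
  have h₁ : 0 < Gamma (x + 1 / 2) := Gamma_pos_of_pos (by linarith)
  have h₂ : 0 < Gamma x := Gamma_pos_of_pos hx
  rw [← log_injOn_pos.eq_iff (by positivity : 0 < 2 * √π * Gamma (x + 1 / 2))
      (by positivity : 0 < 3 * Gamma x), log_mul (by positivity) h₁.ne',
    log_mul (by norm_num) h₂.ne']
  constructor <;> intro h <;> linarith

theorem exists_mem_Ioo_two_sqrt_pi_mul_Gamma_add_half_eq :
    ∃ x ∈ Ioo (1 / 2 : ℝ) 1, 2 * √π * Gamma (x + 1 / 2) = 3 * Gamma x := by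
  set g : ℝ → ℝ := fun x => log (Gamma (x + 1 / 2)) - log (Gamma x)
  have hg_half : g (1 / 2) = -log √π := by
    simp only [g]
    rw [add_halves, Gamma_one, log_one, Gamma_one_half_eq, zero_sub]
  have hg_one : g 1 = log √π - log 2 := by
    simp only [g, Gamma_one, log_one, sub_zero]
    rw [add_comm 1, Gamma_add_one one_half_pos.ne', Gamma_one_half_eq, one_div_mul_eq_div,
      log_div (by positivity) two_ne_zero]
  have h_ivt : log 3 - log (2 * √π) ∈ Ioo (g (1 / 2)) (g 1) := by
    rw [hg_half, hg_one, log_mul two_ne_zero (by positivity), log_sqrt pi_pos.le]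
    have := log_lt_log (by norm_num) (by norm_num : (2 : ℝ) < 3)
    have := log_lt_log (by norm_num) pi_gt_three
    constructor <;> linarith
  have hg_cont : ContinuousOn g (Icc (1 / 2) 1) :=
    (continuousOn_log_Gamma_add_sub_log_Gamma one_half_pos).mono
      fun y (hy : y ∈ Icc _ _) => show 0 < y by linarith [hy.1]
  obtain ⟨x, hx, hgx⟩ := intermediate_value_Ioo (by norm_num) hg_cont h_ivt
  exact ⟨x, hx, (two_sqrt_pi_mul_Gamma_add_half_eq_iff (by linarith [hx.1])).2 hgx⟩

theorem eq_of_two_sqrt_pi_mul_Gamma_add_half_eq {x y : ℝ} (hx : 0 < x) (hy : 0 < y)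
    (hx_eq : 2 * √π * Gamma (x + 1 / 2) = 3 * Gamma x)
    (hy_eq : 2 * √π * Gamma (y + 1 / 2) = 3 * Gamma y) : x = y :=
  (strictMonoOn_log_Gamma_add_sub_log_Gamma one_half_pos).injOn hx hy <|
    ((two_sqrt_pi_mul_Gamma_add_half_eq_iff hx).1 hx_eq).trans
      ((two_sqrt_pi_mul_Gamma_add_half_eq_iff hy).1 hy_eq).symm

end Real

/-- There is a unique `q ∈ (-1, 0)` with `2√π·Γ(1-q/2) = 3·Γ((1-q)/2)`, and it is the
only solution among all `q < 0`. -/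
theorem statement18 :
    ∃ q : ℝ, q ∈ Set.Ioo (-1 : ℝ) 0 ∧
      2 * Real.sqrt Real.pi * Real.Gamma (1 - q / 2) = 3 * Real.Gamma ((1 - q) / 2) ∧
      ∀ q' : ℝ, q' < 0 →
        2 * Real.sqrt Real.pi * Real.Gamma (1 - q' / 2) =
          3 * Real.Gamma ((1 - q') / 2) → q' = q := by
  have h_shift (q : ℝ) : 1 - q / 2 = (1 - q) / 2 + 1 / 2 := by ring
  obtain ⟨x, ⟨hx_gt, hx_lt⟩, hx_eq⟩ := exists_mem_Ioo_two_sqrt_pi_mul_Gamma_add_half_eq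
  have hq : (1 - (1 - 2 * x)) / 2 = x := by ring
  refine ⟨1 - 2 * x, ⟨by linarith, by linarith⟩, by rwa [h_shift, hq], fun q' hq' h => ?_⟩
  rw [h_shift] at h
  have := eq_of_two_sqrt_pi_mul_Gamma_add_half_eq (by linarith) (by linarith) h hx_eq
  linarith
end
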